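/- arXiv:math/0607391 — 2 statements merged into one kernel-verified Lean document; each statement's English description precedes it below -/
import Mathlib

section
/- Every simple right ℂ[NDPF_n]-module is one-dimensional, and there are exactly 2^{n−1} isomorphism classes of simple ℂ[NDPF_n]-modules. Explicitly, for each subset S ⊆ {1,…,n−1} there is a one-dimensional module on which the generator π_i acts by 0 if i ∈ S and by 1 if i ∉ S, and these 2^{n−1} modules are pairwise non-isomorphic and exhaust the simple ℂ[NDPF_n]-modules. -/
open scoped Classical

set_option maxHeartbeats 1000000
set_option synthInstance.maxHeartbeats 400000

noncomputable section

/-- The monoid `NDPFₙ` of non-decreasing parking functions on `{1, …, n}`: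
non-decreasing functions with `f(i) ≤ i`, under composition. -/
def NDPF (n : ℕ) : Type := {f : Fin n → Fin n // Monotone f ∧ ∀ i, f i ≤ i}

instance (n : ℕ) : Monoid (NDPF n) where
  mul f g := ⟨f.1 ∘ g.1, f.2.1.comp g.2.1, fun i => le_trans (f.2.2 (g.1 i)) (g.2.2 i)⟩
  one := ⟨id, monotone_id, fun _ => le_rfl⟩
  mul_assoc _ _ _ := Subtype.ext rfl
  one_mul _ := Subtype.ext rfl
  mul_one _ := Subtype.ext rfl

/-- The generator `πᵢ` of `NDPFₙ`: the function sending `i+1` to `i` and fixing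
every other point (0-indexed). -/
def piGen (n i : ℕ) (h : i + 1 < n) : NDPF n :=
  ⟨fun j => if (j : ℕ) = i + 1 then ⟨i, Nat.lt_of_succ_lt h⟩ else j,
   by
     intro a b hab
     have hab' : (a : ℕ) ≤ (b : ℕ) := hab
     dsimp only
     split_ifs with ha hb hb
     · exact le_rfl
     · rw [Fin.le_def]
       simp only
       omega
     · rw [Fin.le_def]
       simp only
       have hbv := b.isLt
       omega
     · exact hab,
   by
     intro j
     dsimp only
     split_ifs with hj
     · rw [Fin.le_def]
       simp only
       omega
     · exact le_rfl⟩

/-!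
Elements of `NDPFₙ` with the same set of fixed points act identically on a simple module. Indeed,
if `a` and `b` have the same fixed points, then for every `x` either `a x = b x = x` or both
products have strictly larger displacement `∑ⱼ (j - x j)` than `x`; so `a - b` raises the
filtration of `k[NDPFₙ]` by displacement, every element of the left ideal generated by such
differences is nilpotent, and such an ideal acts by zero on a simple module. Consequently the
action of each `f` commutes with everything and is idempotent (`f` and `f²` have the same fixed
points), so by Schur it is `0` or `1`. Every simple module is therefore a line on which `πᵢ` acts by
`0` or `1`, and the characters `f ↦ [f fixes i + 1 for all i ∈ S]` realise every pattern.
-/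

open Function MonoidAlgebra Submodule

namespace IsSimpleModule

variable {R M : Type*} [Ring R] [AddCommGroup M] [Module R M] [IsSimpleModule R M]

/-- If `r • m ≠ 0` it generates `M`, so `m = (s * r) • m` for some `s`, and then
`m = (s * r) ^ j • m = 0`. -/
theorem smul_eq_zero_of_isNilpotent_mul {r : R} (hr : ∀ s : R, IsNilpotent (s * r)) (m : M) :
    r • m = 0 := by
  by_contra hrm
  obtain ⟨s, hs⟩ := mem_span_singleton.1
    (span_singleton_eq_top R hrm ▸ mem_top : m ∈ span R {r • m})
  have hpow : ∀ j : ℕ, (s * r) ^ j • m = m := by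
    intro j
    induction j with
    | zero => rw [pow_zero, one_smul]
    | succ j ih => rw [pow_succ, mul_smul, mul_smul, hs, ih]
  obtain ⟨j, hj⟩ := hr s
  apply hrm
  rw [← hpow j, hj, zero_smul, smul_zero]

theorem smul_eq_zero_or_eq_self {e : R} (hcomm : ∀ (r : R) (x : M), e • r • x = r • e • x)
    (hidem : ∀ x : M, e • e • x = e • x) : (∀ x : M, e • x = 0) ∨ ∀ x : M, e • x = x := by
  let φ : M →ₗ[R] M := { toFun := (e • ·), map_add' := smul_add e, map_smul' := hcomm }
  rcases LinearMap.bijective_or_eq_zero φ with hφ | hφ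
  · exact Or.inr fun x => hφ.injective (hidem x)
  · exact Or.inl fun x => LinearMap.congr_fun hφ x

end IsSimpleModule

namespace NDPF

variable {n : ℕ}

lemma mul_apply (f g : NDPF n) (j : Fin n) : (f * g).1 j = f.1 (g.1 j) := rfl

lemma fixedPoints_mul (f g : NDPF n) :
    fixedPoints (f * g).1 = fixedPoints f.1 ∩ fixedPoints g.1 := by
  ext j
  simp only [Set.mem_inter_iff, mem_fixedPoints, IsFixedPt, mul_apply]
  refine ⟨fun h => ?_, fun ⟨hf, hg⟩ => by rw [hg, hf]⟩
  have hg : g.1 j = j := le_antisymm (g.2.2 j) (h.symm.trans_le (f.2.2 (g.1 j)))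
  rw [hg] at h
  exact ⟨h, hg⟩

lemma mul_eq_self_iff {f x : NDPF n} : f * x = x ↔ Set.range x.1 ⊆ fixedPoints f.1 := by
  rw [Set.range_subset_iff]
  exact ⟨fun h j => congrFun (congrArg Subtype.val h) j, fun h => Subtype.ext (funext h)⟩

lemma mul_eq_self_iff_of_fixedPoints_eq {a b : NDPF n} (hab : fixedPoints a.1 = fixedPoints b.1)
    (x : NDPF n) : a * x = x ↔ b * x = x := by
  rw [mul_eq_self_iff, mul_eq_self_iff, hab]

lemma piGen_apply_eq_self_iff {i : ℕ} (h : i + 1 < n) (j : Fin n) :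
    (piGen n i h).1 j = j ↔ (j : ℕ) ≠ i + 1 := by
  simp only [piGen]
  split_ifs with hj <;> simp [hj, Fin.ext_iff]

def displacement (f : NDPF n) : ℕ := ∑ j : Fin n, ((j : ℕ) - f.1 j)

lemma displacement_le (f : NDPF n) : displacement f ≤ n * n :=
  calc displacement f ≤ ∑ _j : Fin n, n :=
        Finset.sum_le_sum fun j _ => (Nat.sub_le _ _).trans (Fin.isLt j).le
    _ = n * n := by simp

lemma displacement_lt_mul {f x : NDPF n} (h : f * x ≠ x) :
    displacement x < displacement (f * x) := by
  obtain ⟨_, ⟨j, rfl⟩, hj⟩ := Set.not_subset.1 (mt mul_eq_self_iff.2 h)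
  have hlt : (f.1 (x.1 j) : ℕ) < x.1 j := lt_of_le_of_ne (f.2.2 _) (Fin.val_ne_of_ne hj)
  refine Finset.sum_lt_sum (fun i _ => Nat.sub_le_sub_left (f.2.2 _) _) ⟨j, Finset.mem_univ _, ?_⟩
  have := x.2.2 j
  simp only [mul_apply]
  omega

def displacementFiltration (k : Type*) [CommRing k] (n d : ℕ) : Submodule k k[NDPF n] :=
  span k (of k (NDPF n) '' {x | d ≤ displacement x})

def sameFixedPointsSpan (k : Type*) [CommRing k] (n : ℕ) : Submodule k k[NDPF n] :=
  span k {u | ∃ a b : NDPF n, fixedPoints a.1 = fixedPoints b.1 ∧ of k _ a - of k _ b = u}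

section Algebra

variable {k : Type*} [CommRing k]

lemma one_mem_displacementFiltration_zero : (1 : k[NDPF n]) ∈ displacementFiltration k n 0 :=
  subset_span ⟨1, Nat.zero_le _, map_one _⟩

lemma displacementFiltration_eq_bot :
    displacementFiltration k n (n * n + 1) = (⊥ : Submodule k k[NDPF n]) := by
  rw [displacementFiltration, span_eq_bot]
  rintro _ ⟨x, hx, rfl⟩
  exact absurd hx (not_le.2 (Nat.lt_succ_of_le (displacement_le x)))

lemma mul_mem_displacementFiltration_succ {u y : k[NDPF n]} (hu : u ∈ sameFixedPointsSpan k n)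
    {d : ℕ} (hy : y ∈ displacementFiltration k n d) :
    u * y ∈ displacementFiltration k n (d + 1) := by
  refine (?_ : sameFixedPointsSpan k n * displacementFiltration k n d ≤ _) (mul_mem_mul hu hy)
  rw [sameFixedPointsSpan, displacementFiltration, span_mul_span, span_le]
  rintro _ ⟨_, ⟨a, b, hab, rfl⟩, _, ⟨x, hx, rfl⟩, rfl⟩
  simp only [SetLike.mem_coe, sub_mul, ← map_mul]
  by_cases hax : a * x = x
  · rw [hax, (mul_eq_self_iff_of_fixedPoints_eq hab x).1 hax, sub_self]
    exact zero_mem _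
  · have hbx := mt (mul_eq_self_iff_of_fixedPoints_eq hab x).2 hax
    exact sub_mem (subset_span ⟨_, hx.trans_lt (displacement_lt_mul hax), rfl⟩)
      (subset_span ⟨_, hx.trans_lt (displacement_lt_mul hbx), rfl⟩)

lemma isNilpotent_of_mem_sameFixedPointsSpan {u : k[NDPF n]}
    (hu : u ∈ sameFixedPointsSpan k n) : IsNilpotent u := by
  have hpow : ∀ d, u ^ d ∈ displacementFiltration k n d := by
    intro d
    induction d with
    | zero => exact one_mem_displacementFiltration_zero
    | succ d ih => exact pow_succ' u d ▸ mul_mem_displacementFiltration_succ hu ih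
  refine ⟨n * n + 1, ?_⟩
  simpa [displacementFiltration_eq_bot] using hpow (n * n + 1)

lemma mul_sub_mem_sameFixedPointsSpan (s : k[NDPF n]) {a b : NDPF n}
    (hab : fixedPoints a.1 = fixedPoints b.1) :
    s * (of k _ a - of k _ b) ∈ sameFixedPointsSpan k n := by
  induction s using MonoidAlgebra.induction_on with
  | of g =>
    rw [mul_sub, ← map_mul, ← map_mul]
    refine subset_span ⟨g * a, g * b, ?_, rfl⟩
    rw [fixedPoints_mul, fixedPoints_mul, hab]
  | add s t hs ht => rw [add_mul]; exact add_mem hs ht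
  | smul c s hs => rw [smul_mul_assoc]; exact smul_mem _ c hs

variable {M : Type*} [AddCommGroup M] [Module k[NDPF n] M] [IsSimpleModule k[NDPF n] M]

lemma of_smul_eq_of_smul {a b : NDPF n} (hab : fixedPoints a.1 = fixedPoints b.1) (m : M) :
    of k _ a • m = of k _ b • m := by
  rw [← sub_eq_zero, ← sub_smul]
  exact IsSimpleModule.smul_eq_zero_of_isNilpotent_mul
    (fun s => isNilpotent_of_mem_sameFixedPointsSpan (mul_sub_mem_sameFixedPointsSpan s hab)) m

lemma of_smul_comm (f : NDPF n) (r : k[NDPF n]) (x : M) :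
    of k _ f • r • x = r • of k _ f • x := by
  induction r using MonoidAlgebra.induction_on generalizing x with
  | of g =>
    rw [← mul_smul, ← mul_smul, ← map_mul, ← map_mul]
    exact of_smul_eq_of_smul (by rw [fixedPoints_mul, fixedPoints_mul, Set.inter_comm]) x
  | add r s hr hs => rw [add_smul, add_smul, smul_add, hr, hs]
  | smul c r hr =>
    rw [Algebra.smul_def, mul_smul, mul_smul, ← hr, ← mul_smul (of k _ f), ← Algebra.commutes,
      mul_smul]

lemma of_smul_of_smul_self (f : NDPF n) (x : M) : of k _ f • of k _ f • x = of k _ f • x := by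
  rw [← mul_smul, ← map_mul]
  exact of_smul_eq_of_smul (by rw [fixedPoints_mul, Set.inter_self]) x

lemma of_smul_eq_zero_or_eq_self (f : NDPF n) :
    (∀ x : M, of k _ f • x = 0) ∨ ∀ x : M, of k _ f • x = x :=
  IsSimpleModule.smul_eq_zero_or_eq_self (of_smul_comm (k := k) f) (of_smul_of_smul_self f)

lemma of_smul_eq_zero_iff_forall {m : M} (hm : m ≠ 0) (f : NDPF n) :
    of k _ f • m = 0 ↔ ∀ x : M, of k _ f • x = 0 := by
  refine ⟨fun h => (of_smul_eq_zero_or_eq_self (k := k) f).resolve_right fun hid => hm ?_,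
    fun h => h m⟩
  rw [← hid m, h]

lemma exists_smul_eq_algebraMap_smul (r : k[NDPF n]) (m : M) :
    ∃ c : k, r • m = algebraMap k k[NDPF n] c • m := by
  induction r using MonoidAlgebra.induction_on with
  | of g =>
    rcases of_smul_eq_zero_or_eq_self (k := k) (M := M) g with h | h
    · exact ⟨0, by rw [h, map_zero, zero_smul]⟩
    · exact ⟨1, by rw [h, map_one, one_smul]⟩
  | add r s hr hs =>
    obtain ⟨c, hc⟩ := hr
    obtain ⟨d, hd⟩ := hs
    exact ⟨c + d, by rw [add_smul, hc, hd, map_add, add_smul]⟩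
  | smul c r hr =>
    obtain ⟨d, hd⟩ := hr
    exact ⟨c * d, by rw [Algebra.smul_def, mul_smul, hd, ← mul_smul, ← map_mul]⟩

lemma exists_ne_zero_forall_eq_algebraMap_smul :
    ∃ m : M, m ≠ 0 ∧ ∀ m' : M, ∃ c : k, m' = algebraMap k k[NDPF n] c • m := by
  have := IsSimpleModule.nontrivial k[NDPF n] M
  obtain ⟨m, hm⟩ := exists_ne (0 : M)
  refine ⟨m, hm, fun m' => ?_⟩
  obtain ⟨r, rfl⟩ := mem_span_singleton.1
    (IsSimpleModule.span_singleton_eq_top k[NDPF n] hm ▸ mem_top : m' ∈ span k[NDPF n] {m})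
  exact exists_smul_eq_algebraMap_smul r m

end Algebra

def fixingChar (k : Type*) [MonoidWithZero k] (T : Set (Fin n)) : NDPF n →* k where
  toFun f := if T ⊆ fixedPoints f.1 then 1 else 0
  map_one' := if_pos fun _ _ => rfl
  map_mul' f g := by
    simp only [fixedPoints_mul, Set.subset_inter_iff, ite_zero_mul_ite_zero, mul_one]

lemma fixingChar_apply (k : Type*) [MonoidWithZero k] (T : Set (Fin n)) (f : NDPF n) :
    fixingChar k T f = if T ⊆ fixedPoints f.1 then 1 else 0 := rfl

lemma fixingChar_piGen (k : Type*) [MonoidWithZero k] (S : Set ℕ) {i : ℕ} (h : i + 1 < n) :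
    fixingChar k {j | ∃ i ∈ S, (j : ℕ) = i + 1} (piGen n i h) = if i ∈ S then 0 else 1 := by
  rw [fixingChar_apply]
  by_cases hi : i ∈ S
  · refine (if_neg fun hsub => ?_).trans (if_pos hi).symm
    exact (piGen_apply_eq_self_iff h ⟨i + 1, h⟩).1 (hsub ⟨i, hi, rfl⟩) rfl
  · refine (if_pos ?_).trans (if_neg hi).symm
    rintro j ⟨i', hi', hj⟩
    refine (piGen_apply_eq_self_iff h j).2 fun hji => hi ?_
    rwa [show i = i' by omega]

end NDPF

open NDPF in
theorem ndpf_simple_modules_general (n : ℕ) :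
    (∀ (M : Type) [AddCommGroup M] [Module (MonoidAlgebra ℂ (NDPF n)) M],
      IsSimpleModule (MonoidAlgebra ℂ (NDPF n)) M →
      ∃ m : M, m ≠ 0 ∧
        ∀ m' : M, ∃ c : ℂ, m' = algebraMap ℂ (MonoidAlgebra ℂ (NDPF n)) c • m) ∧
    (∀ S : Set ℕ, (∀ i ∈ S, i + 1 < n) →
      ∃ χ : NDPF n →* ℂ, ∀ (i : ℕ) (h : i + 1 < n),
        χ (piGen n i h) = if i ∈ S then 0 else 1) ∧
    (∀ (M : Type) [AddCommGroup M] [Module (MonoidAlgebra ℂ (NDPF n)) M],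
      IsSimpleModule (MonoidAlgebra ℂ (NDPF n)) M →
      ∃! S : Set ℕ, (∀ i ∈ S, i + 1 < n) ∧
        ∃ m : M, m ≠ 0 ∧
          (∀ m' : M, ∃ c : ℂ, m' = algebraMap ℂ (MonoidAlgebra ℂ (NDPF n)) c • m) ∧
          ∀ (i : ℕ) (h : i + 1 < n),
            (MonoidAlgebra.of ℂ (NDPF n) (piGen n i h)) • m =
              if i ∈ S then 0 else m) := by
  refine ⟨fun M _ _ hM => ?_, fun S _ => ⟨fixingChar ℂ _, fun i h => fixingChar_piGen ℂ S h⟩,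
    fun M _ _ hM => ?_⟩
  · have := hM
    exact exists_ne_zero_forall_eq_algebraMap_smul
  have := hM
  obtain ⟨m, hm, hspan⟩ := exists_ne_zero_forall_eq_algebraMap_smul (n := n) (k := ℂ) (M := M)
  refine ⟨{i | ∃ h : i + 1 < n, ∀ x : M, of ℂ _ (piGen n i h) • x = 0},
    ⟨fun i ⟨h, _⟩ => h, m, hm, hspan, fun i h => ?_⟩, ?_⟩
  · split_ifs with hi
    · exact hi.2 m
    · exact ((of_smul_eq_zero_or_eq_self (piGen n i h)).resolve_left fun hz => hi ⟨h, hz⟩) m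
  · rintro S ⟨hS, m', hm', -, hact⟩
    ext i
    refine ⟨fun hi => ⟨hS i hi, ?_⟩, fun ⟨h, hz⟩ => ?_⟩
    · rw [← of_smul_eq_zero_iff_forall hm', hact, if_pos hi]
    · by_contra hi
      have hm'fixed := hact i h
      rw [if_neg hi, hz] at hm'fixed
      exact hm' hm'fixed.symm

/-- **Statement 17.** Every simple `ℂ[NDPFₙ]`-module is one-dimensional; for each
subset `S` of the generator indices there is a character of `NDPFₙ` (hence a
one-dimensional module) sending `πᵢ` to `0` for `i ∈ S` and to `1` for `i ∉ S`; and
every simple module arises this way, for exactly one subset `S` (so there are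
exactly `2^{n-1}` isomorphism classes of simple `ℂ[NDPFₙ]`-modules, one for each
subset of `{0, …, n-2}`). -/
theorem ndpf_simple_modules (n : ℕ) (hn : 1 ≤ n) :
    (∀ (M : Type) [AddCommGroup M] [Module (MonoidAlgebra ℂ (NDPF n)) M],
      IsSimpleModule (MonoidAlgebra ℂ (NDPF n)) M →
      ∃ m : M, m ≠ 0 ∧
        ∀ m' : M, ∃ c : ℂ, m' = algebraMap ℂ (MonoidAlgebra ℂ (NDPF n)) c • m) ∧
    (∀ S : Set ℕ, (∀ i ∈ S, i + 1 < n) →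
      ∃ χ : NDPF n →* ℂ, ∀ (i : ℕ) (h : i + 1 < n),
        χ (piGen n i h) = if i ∈ S then 0 else 1) ∧
    (∀ (M : Type) [AddCommGroup M] [Module (MonoidAlgebra ℂ (NDPF n)) M],
      IsSimpleModule (MonoidAlgebra ℂ (NDPF n)) M →
      ∃! S : Set ℕ, (∀ i ∈ S, i + 1 < n) ∧
        ∃ m : M, m ≠ 0 ∧
          (∀ m' : M, ∃ c : ℂ, m' = algebraMap ℂ (MonoidAlgebra ℂ (NDPF n)) c • m) ∧
          ∀ (i : ℕ) (h : i + 1 < n),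
            (MonoidAlgebra.of ℂ (NDPF n) (piGen n i h)) • m =
              if i ∈ S then 0 else m) :=
  ndpf_simple_modules_general n
end
end

section
/- There is an isomorphism of ℂ-algebras ℂ[NDPF_n] ≅ ⊕_{k=0}^{n−1} ℂ[G_{n−1,k}], where G_{m,k} denotes the poset of k-element subsets of {1,…,m} ordered by: S ≤ T if and only if, writing S = {s_1 < ⋯ < s_k} and T = {t_1 < ⋯ < t_k}, one has s_i ≤ t_i for all i = 1,…,k. -/
/-!
`NDPF (m+1)` acts on the subsets of `Fin (m+1)` containing `0` by taking images, and an image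
is never larger than the subset. Keeping only the subsets of size `k+1`, and sending a subset
whose image is smaller to `0`, gives a representation of `NDPF (m+1)` by `0/1` matrices indexed
by `G_{m,k}` (via `S ↦ {0} ∪ (S+1)`); these matrices lie in the incidence algebra because
`f(T) = S` with `|S| = |T|` forces `S ≤ T` in the Gale order, `f` being non-decreasing with
`f ≤ id`.

The sum of these representations is injective: for the set `T_f` of minima of the fibres of `f`,
every `g` with `g(T_f) = f(T_f)` satisfies `f ≤ g` pointwise, so the matrix entry at
`(f(T_f), T_f)` of a kernel element only sees coefficients of `g ≥ f`. It is surjective: for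
`S ≤ T` there is an `f` with `f(T) = S` and image `S`, so its other nonzero entries lie in
smaller components or in row `S` at columns strictly above `T`, and induction on
`(k, T)` produces every matrix unit.
-/

open scoped Classical

set_option maxHeartbeats 1000000
set_option synthInstance.maxHeartbeats 400000

noncomputable section

/-- The set `G_{m,k}` of `k`-element subsets of `{1, …, m}` (modeled as `Fin m`). -/
def GType (m k : ℕ) : Type := {S : Finset (Fin m) // S.card = k}

/-- The product (Gale) order on `G_{m,k}`: `S ≤ T` iff `sᵢ ≤ tᵢ` for all `i`, where
`s₁ < ⋯ < s_k` and `t₁ < ⋯ < t_k` are the elements of `S` and `T` written in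
increasing order. -/
instance (m k : ℕ) : PartialOrder (GType m k) where
  le S T := List.Forall₂ (· ≤ ·) (S.1.sort (· ≤ ·)) (T.1.sort (· ≤ ·))
  le_refl S := List.forall₂_same.2 fun x _ => le_rfl
  le_trans S T U hST hTU := by
    replace hST : List.Forall₂ (· ≤ ·) (S.1.sort (· ≤ ·)) (T.1.sort (· ≤ ·)) := hST
    replace hTU : List.Forall₂ (· ≤ ·) (T.1.sort (· ≤ ·)) (U.1.sort (· ≤ ·)) := hTU
    show List.Forall₂ (· ≤ ·) (S.1.sort (· ≤ ·)) (U.1.sort (· ≤ ·))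
    rw [List.forall₂_iff_get] at hST hTU ⊢
    obtain ⟨h1, h2⟩ := hST
    obtain ⟨h3, h4⟩ := hTU
    refine ⟨h1.trans h3, fun i hi1 hi2 => ?_⟩
    exact le_trans (h2 i hi1 (by omega)) (h4 i (by omega) hi2)
  le_antisymm S T hST hTS := by
    replace hST : List.Forall₂ (· ≤ ·) (S.1.sort (· ≤ ·)) (T.1.sort (· ≤ ·)) := hST
    replace hTS : List.Forall₂ (· ≤ ·) (T.1.sort (· ≤ ·)) (S.1.sort (· ≤ ·)) := hTS
    rw [List.forall₂_iff_get] at hST hTS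
    obtain ⟨h1, h2⟩ := hST
    obtain ⟨h3, h4⟩ := hTS
    have hlist : S.1.sort (· ≤ ·) = T.1.sort (· ≤ ·) := by
      apply List.ext_get h1
      intro i hi1 hi2
      exact le_antisymm (h2 i hi1 hi2) (h4 i hi2 hi1)
    have : S.1 = T.1 := by
      have hs := Finset.sort_toFinset S.1 (· ≤ ·)
      have ht := Finset.sort_toFinset T.1 (· ≤ ·)
      rw [← hs, ← ht, hlist]
    exact Subtype.ext this

instance (m k : ℕ) : Fintype (GType m k) :=
  inferInstanceAs (Fintype {S : Finset (Fin m) // S.card = k})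

instance (m k : ℕ) : DecidableEq (GType m k) := Classical.decEq _

/-- The incidence algebra `ℂ[P]` of a finite poset `P`, realized concretely as the
algebra of matrices supported on the pairs `(u, v)` with `u ≤ v`.  Its basis elements
`E_{(u,v)}` (`u ≤ v`) multiply by `E_{(u,v)} · E_{(u',v')} = δ_{v,u'} E_{(u,v')}`,
which is the multiplication rule of the paper. -/
def incMatAlg (P : Type) [Fintype P] [PartialOrder P] [DecidableEq P] :
    Subalgebra ℂ (Matrix P P ℂ) where
  carrier := {M | ∀ u v : P, ¬ u ≤ v → M u v = 0}
  mul_mem' := by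
    intro a b ha hb u v huv
    rw [Matrix.mul_apply]
    refine Finset.sum_eq_zero fun c _ => ?_
    by_cases hc : u ≤ c
    · rw [hb c v fun hcv => huv (hc.trans hcv), mul_zero]
    · rw [ha u c hc, zero_mul]
  add_mem' := by
    intro a b ha hb u v huv
    simp [Matrix.add_apply, ha u v huv, hb u v huv]
  algebraMap_mem' := by
    intro c u v huv
    have : u ≠ v := fun h => huv (h ▸ le_refl u)
    simp [Matrix.algebraMap_matrix_apply, this]

open Finset
open scoped Pointwise

section OrderEmbOfFin

variable {α β : Type*} [LinearOrder α] [LinearOrder β]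

theorem Finset.forall₂_sort_iff {R : α → α → Prop} {s t : Finset α} {k : ℕ} (hs : s.card = k)
    (ht : t.card = k) :
    List.Forall₂ R (s.sort (· ≤ ·)) (t.sort (· ≤ ·)) ↔
      ∀ j, R (s.orderEmbOfFin hs j) (t.orderEmbOfFin ht j) := by
  rw [← s.listMap_orderEmbOfFin_finRange hs, ← t.listMap_orderEmbOfFin_finRange ht,
    List.forall₂_map_left_iff, List.forall₂_map_right_iff, List.forall₂_same]
  simp

theorem StrictMonoOn.comp_orderEmbOfFin {f : α → β} {s : Finset α} {t : Finset β}
    (hf : StrictMonoOn f s) (hst : s.image f = t) {k : ℕ} (hs : s.card = k) (ht : t.card = k) :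
    f ∘ s.orderEmbOfFin hs = t.orderEmbOfFin ht :=
  orderEmbOfFin_unique ht (fun j => hst ▸ mem_image_of_mem f (orderEmbOfFin_mem s hs j))
    fun _ _ hij => hf (orderEmbOfFin_mem s hs _) (orderEmbOfFin_mem s hs _)
      ((s.orderEmbOfFin hs).strictMono hij)

theorem StrictMonoOn.eqOn_of_image_eq {f g : α → β} {s : Finset α} (hf : StrictMonoOn f s)
    (hg : StrictMonoOn g s) (h : s.image f = s.image g) : Set.EqOn f g s := by
  intro x hx
  obtain ⟨j, rfl⟩ : x ∈ Set.range (s.orderEmbOfFin rfl) := by simpa using hx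
  have hcard : (s.image g).card = s.card := card_image_of_injOn hg.injOn
  exact (congrFun (hf.comp_orderEmbOfFin h rfl hcard) j).trans
    (congrFun (hg.comp_orderEmbOfFin rfl rfl hcard) j).symm

end OrderEmbOfFin

section ActionMatrix

variable {M Ω I R : Type*} [Monoid M] [MulAction M Ω] [DecidableEq Ω] [Fintype I] [DecidableEq I]
  [Semiring R]

variable (R) in
def actionMatrix (ι : I → Ω) (f : M) : Matrix I I R :=
  Matrix.of fun u v => if f • ι v = ι u then 1 else 0

/-- When points that leave `ι '' I` never come back, the partial action is a representation. -/
def actionMatrixHom (ι : I → Ω) (hι : Function.Injective ι)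
    (hleave : ∀ (f g : M) v u, (g * f) • ι v = ι u → ∃ w, f • ι v = ι w) :
    M →* Matrix I I R where
  toFun := actionMatrix R ι
  map_one' := by
    ext u v
    simp [actionMatrix, Matrix.one_apply, hι.eq_iff, eq_comm]
  map_mul' f g := by
    ext u v
    rw [Matrix.mul_apply]
    by_cases hv : ∃ w, g • ι v = ι w
    · obtain ⟨w, hw⟩ := hv
      rw [Finset.sum_eq_single w]
      · simp [actionMatrix, mul_smul, hw]
      · intro w' _ hw'
        simp [actionMatrix, hw, hι.eq_iff, Ne.symm hw']
      · simp
    · simp only [not_exists] at hv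
      have hfg : ∀ u, (f * g) • ι v ≠ ι u := fun u h => by
        obtain ⟨w, hw⟩ := hleave g f v u h
        exact hv w hw
      simp [actionMatrix, hv, hfg]

end ActionMatrix

section IncidenceBasis

variable {P : Type} [Fintype P] [PartialOrder P] [DecidableEq P]

def incMatAlgSingle {u v : P} (h : u ≤ v) : incMatAlg P :=
  ⟨Matrix.single u v 1, fun a b hab => by
    rw [Matrix.single_apply_of_ne]
    rintro ⟨rfl, rfl⟩
    exact hab h⟩

theorem coe_incMatAlgSingle {u v : P} (h : u ≤ v) :
    (incMatAlgSingle h : Matrix P P ℂ) = Matrix.single u v 1 := rfl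

theorem incMatAlg_mem_of_single_mem {S : Submodule ℂ (incMatAlg P)} (M : incMatAlg P)
    (hS : ∀ u v (h : u ≤ v), (M : Matrix P P ℂ) u v ≠ 0 → incMatAlgSingle h ∈ S) : M ∈ S := by
  have hM : M = ∑ u, ∑ v,
      (M : Matrix P P ℂ) u v • (if h : u ≤ v then incMatAlgSingle h else 0) := by
    apply Subtype.ext
    simp only [AddSubmonoidClass.coe_finsetSum]
    refine (Matrix.matrix_eq_sum_single (M : Matrix P P ℂ)).trans
      (sum_congr rfl fun u _ => sum_congr rfl fun v _ => ?_)
    by_cases h : u ≤ v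
    · simp [h, coe_incMatAlgSingle, Matrix.smul_single]
    · simp [h, M.2 u v h]
  rw [hM]
  refine sum_mem fun u _ => sum_mem fun v _ => ?_
  by_cases hne : (M : Matrix P P ℂ) u v = 0
  · simp [hne]
  · have h : u ≤ v := by_contra fun h => hne (M.2 u v h)
    simpa [h] using S.smul_mem _ (hS u v h hne)

theorem pi_incMatAlg_mem_of_single_mem {ι : Type} [Fintype ι] [DecidableEq ι] {P : ι → Type}
    [∀ i, Fintype (P i)] [∀ i, PartialOrder (P i)] [∀ i, DecidableEq (P i)]
    {S : Submodule ℂ (∀ i, incMatAlg (P i))} (y : ∀ i, incMatAlg (P i))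
    (hS : ∀ i u v (h : u ≤ v), (y i : Matrix (P i) (P i) ℂ) u v ≠ 0 →
      Pi.single i (incMatAlgSingle h) ∈ S) : y ∈ S := by
  rw [← Finset.univ_sum_single y]
  exact sum_mem fun i _ => incMatAlg_mem_of_single_mem
    (S := S.comap (LinearMap.single ℂ (fun i => incMatAlg (P i)) i)) (y i) (hS i)

end IncidenceBasis

namespace NDPF

variable {n : ℕ}

instance : MulAction (NDPF n) (Fin n) where
  smul f i := f.1 i
  one_smul _ := rfl
  mul_smul _ _ _ := rfl

instance : PartialOrder (NDPF n) :=
  PartialOrder.lift (fun f => f.1) fun _ _ => Subtype.ext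

instance : Finite (NDPF n) :=
  inferInstanceAs (Finite {f : Fin n → Fin n // Monotone f ∧ ∀ i, f i ≤ i})

theorem le_def {f g : NDPF n} : f ≤ g ↔ ∀ i : Fin n, f • i ≤ g • i := Iff.rfl

theorem monotone_smul (f : NDPF n) : Monotone (f • · : Fin n → Fin n) := f.2.1

theorem smul_le (f : NDPF n) (i : Fin n) : f • i ≤ i := f.2.2 i

theorem strictMonoOn_of_card_smul {f : NDPF n} {X : Finset (Fin n)} (h : (f • X).card = X.card) :
    StrictMonoOn (f • ·) (X : Set (Fin n)) :=
  (f.monotone_smul.monotoneOn _).strictMonoOn_of_injOn (card_image_iff.1 h)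

theorem zero_mem_smul {m : ℕ} (f : NDPF (m + 1)) {X : Finset (Fin (m + 1))} (h : 0 ∈ X) :
    0 ∈ f • X :=
  mem_smul_finset.2 ⟨0, h, Fin.le_zero_iff.1 (f.smul_le 0)⟩

def fiberMins (f : NDPF n) : Finset (Fin n) := univ.filter fun i => ∀ j < i, f • j < f • i

theorem strictMonoOn_fiberMins (f : NDPF n) : StrictMonoOn (f • ·) (fiberMins f : Set (Fin n)) :=
  fun _ _ _ hb hab => (mem_filter.1 hb).2 _ hab

theorem card_smul_fiberMins (f : NDPF n) : (f • fiberMins f).card = (fiberMins f).card :=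
  card_image_of_injOn f.strictMonoOn_fiberMins.injOn

theorem zero_mem_fiberMins {m : ℕ} (f : NDPF (m + 1)) : 0 ∈ fiberMins f := by
  simp [fiberMins]

theorem exists_mem_fiberMins (f : NDPF n) (i : Fin n) :
    ∃ t ∈ fiberMins f, t ≤ i ∧ f • t = f • i := by
  set F := univ.filter fun j => f • j = f • i
  have hF : F.Nonempty := ⟨i, by simp [F]⟩
  have hmin : f • F.min' hF = f • i := (mem_filter.1 (F.min'_mem hF)).2
  refine ⟨F.min' hF, ?_, F.min'_le i (by simp [F]), hmin⟩
  simp only [fiberMins, mem_filter, mem_univ, true_and]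
  intro j hj
  refine lt_of_le_of_ne (f.monotone_smul hj.le) fun h => ?_
  exact (F.min'_le j (by simp [F, h, hmin])).not_gt hj

theorem le_of_smul_fiberMins_eq {f g : NDPF n} (h : g • fiberMins f = f • fiberMins f) :
    f ≤ g := by
  have hg : StrictMonoOn (g • ·) (fiberMins f : Set (Fin n)) :=
    strictMonoOn_of_card_smul (by rw [h, card_smul_fiberMins])
  have heq := f.strictMonoOn_fiberMins.eqOn_of_image_eq hg h.symm
  refine le_def.2 fun i => ?_
  obtain ⟨t, ht, hti, hft⟩ := f.exists_mem_fiberMins i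
  calc f • i = f • t := hft.symm
    _ = g • t := heq ht
    _ ≤ g • i := g.monotone_smul hti

variable {k : ℕ} {a b : Fin (k + 1) ↪o Fin n}

def lastIdxLE (b : Fin (k + 1) ↪o Fin n) (hb : IsBot (b 0)) (i : Fin n) : Fin (k + 1) :=
  (univ.filter fun j => b j ≤ i).max' ⟨0, by simpa using hb i⟩

theorem apply_lastIdxLE_le (hb : IsBot (b 0)) (i : Fin n) : b (lastIdxLE b hb i) ≤ i :=
  (mem_filter.1 (max'_mem (univ.filter fun j => b j ≤ i) _)).2

theorem lastIdxLE_mono (hb : IsBot (b 0)) : Monotone (lastIdxLE b hb) :=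
  fun _ _ hii' => max'_subset _ fun _ hj => by
    simp only [mem_filter, mem_univ, true_and] at hj ⊢
    exact hj.trans hii'

theorem lastIdxLE_apply (hb : IsBot (b 0)) (j : Fin (k + 1)) : lastIdxLE b hb (b j) = j :=
  le_antisymm (max'_le _ _ _ fun _ hj => b.le_iff_le.1 (mem_filter.1 hj).2)
    (le_max' _ _ (by simp))

def ofLE (a b : Fin (k + 1) ↪o Fin n) (hb : IsBot (b 0)) (hab : ∀ j, a j ≤ b j) : NDPF n :=
  ⟨fun i => a (lastIdxLE b hb i), a.monotone.comp (lastIdxLE_mono hb),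
    fun i => (hab _).trans (apply_lastIdxLE_le hb i)⟩

variable (hb : IsBot (b 0)) (hab : ∀ j, a j ≤ b j)

theorem ofLE_smul_apply (j : Fin (k + 1)) : ofLE a b hb hab • b j = a j :=
  congrArg a (lastIdxLE_apply hb j)

theorem le_of_ofLE_smul_eq {i : Fin n} {j : Fin (k + 1)} (h : ofLE a b hb hab • i = a j) :
    b j ≤ i :=
  a.injective h ▸ apply_lastIdxLE_le hb i

end NDPF

namespace GType

variable {m k : ℕ}

theorem le_iff (A B : GType m k) :
    A ≤ B ↔ ∀ j, A.1.orderEmbOfFin A.2 j ≤ B.1.orderEmbOfFin B.2 j :=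
  forall₂_sort_iff A.2 B.2

def consZero (S : GType m k) : Finset (Fin (m + 1)) :=
  cons 0 (S.1.map (Fin.succEmb m)) (by simp [Fin.succ_ne_zero])

theorem card_consZero (S : GType m k) : (consZero S).card = k + 1 := by
  simp [consZero, S.2]

theorem zero_mem_consZero (S : GType m k) : 0 ∈ consZero S := mem_cons_self _ _

theorem consZero_injective : Function.Injective (consZero (m := m) (k := k)) := by
  intro S T h
  apply Subtype.ext
  ext y
  have := congrArg (y.succ ∈ ·) h
  simpa [consZero, Fin.succ_ne_zero] using this

theorem exists_consZero_eq {X : Finset (Fin (m + 1))} (h0 : 0 ∈ X) (hX : X.card = k + 1) :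
    ∃ S : GType m k, consZero S = X := by
  set S := univ.filter fun i : Fin m => i.succ ∈ X
  have hS : cons 0 (S.map (Fin.succEmb m)) (by simp [Fin.succ_ne_zero]) = X := by
    ext x
    cases x using Fin.cases <;> simp [S, h0, Fin.succ_ne_zero]
  have hcard : S.card = k := by
    have := congrArg card hS
    simp only [card_cons, card_map] at this
    omega
  exact ⟨⟨S, hcard⟩, hS⟩

def consZeroEmb (S : GType m k) : Fin (k + 1) ↪o Fin (m + 1) :=
  (consZero S).orderEmbOfFin (card_consZero S)

theorem consZeroEmb_eq_cons (S : GType m k) :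
    ⇑(consZeroEmb S) = Fin.cons 0 fun j => (S.1.orderEmbOfFin S.2 j).succ := by
  refine (orderEmbOfFin_unique _ (fun j => ?_) ?_).symm
  · refine Fin.cases (zero_mem_consZero S) (fun j => ?_) j
    simp [consZero]
  · exact Fin.strictMono_cons.2 ⟨fun j => Fin.succ_pos _,
      Fin.strictMono_succ.comp (S.1.orderEmbOfFin S.2).strictMono⟩

theorem le_iff_consZeroEmb (A B : GType m k) :
    A ≤ B ↔ ∀ j, consZeroEmb A j ≤ consZeroEmb B j := by
  simp [le_iff A B, consZeroEmb_eq_cons, Fin.forall_fin_succ]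

theorem exists_smul_consZero_eq_of_mul {f g : NDPF (m + 1)} {u v : GType m k}
    (h : (g * f) • consZero v = consZero u) : ∃ w : GType m k, f • consZero v = consZero w := by
  have hcard : (f • consZero v).card = k + 1 := by
    refine le_antisymm (card_smul_finset_le.trans (card_consZero v).le) ?_
    calc k + 1 = (g • f • consZero v).card := by rw [← mul_smul, h, card_consZero]
      _ ≤ (f • consZero v).card := card_smul_finset_le
  obtain ⟨w, hw⟩ := exists_consZero_eq (f.zero_mem_smul (zero_mem_consZero v)) hcard
  exact ⟨w, hw.symm⟩

theorem consZeroEmb_eq_smul {f : NDPF (m + 1)} {u v : GType m k}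
    (h : f • consZero v = consZero u) (j : Fin (k + 1)) :
    consZeroEmb u j = f • consZeroEmb v j := by
  have hcard : (f • consZero v).card = (consZero v).card := by
    rw [h, card_consZero, card_consZero]
  exact (congrFun ((NDPF.strictMonoOn_of_card_smul hcard).comp_orderEmbOfFin h _ _) j).symm

theorem le_of_smul_consZero_eq {f : NDPF (m + 1)} {u v : GType m k}
    (h : f • consZero v = consZero u) : u ≤ v :=
  (le_iff_consZeroEmb u v).2 fun j => (consZeroEmb_eq_smul h j).trans_le (f.smul_le _)

theorem exists_consZero_eq_smul {f : NDPF (m + 1)} {X : Finset (Fin (m + 1))} (h0 : 0 ∈ X)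
    (hX : (f • X).card = X.card) :
    ∃ (k : Fin (m + 1)) (u v : GType m k), consZero v = X ∧ consZero u = f • X := by
  have hpos : 0 < X.card := card_pos.2 ⟨0, h0⟩
  have hle : X.card ≤ m + 1 := by simpa using card_le_univ X
  obtain ⟨v, hv⟩ := exists_consZero_eq (k := X.card - 1) h0 (by omega)
  obtain ⟨u, hu⟩ := exists_consZero_eq (k := X.card - 1) (f.zero_mem_smul h0) (by omega)
  exact ⟨⟨X.card - 1, by omega⟩, u, v, hv, hu⟩

theorem isBot_consZeroEmb_zero (v : GType m k) : IsBot (consZeroEmb v 0) := by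
  rw [consZeroEmb_eq_cons, Fin.cons_zero]
  exact Fin.zero_le

theorem consZero_eq_image (v : GType m k) : consZero v = univ.image (consZeroEmb v) :=
  (image_orderEmbOfFin_univ _ _).symm

def ndpfOfLE {u v : GType m k} (h : u ≤ v) : NDPF (m + 1) :=
  NDPF.ofLE (consZeroEmb u) (consZeroEmb v) (isBot_consZeroEmb_zero v)
    ((le_iff_consZeroEmb u v).1 h)

variable {u v : GType m k} (h : u ≤ v)

theorem ndpfOfLE_smul_consZero : ndpfOfLE h • consZero v = consZero u := by
  simp only [consZero_eq_image, smul_finset_def, image_image]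
  congr 1
  ext j : 1
  exact NDPF.ofLE_smul_apply _ _ j

theorem ndpfOfLE_smul_subset (X : Finset (Fin (m + 1))) : ndpfOfLE h • X ⊆ consZero u := by
  rw [consZero_eq_image]
  intro x hx
  obtain ⟨i, -, rfl⟩ := mem_smul_finset.1 hx
  exact mem_image_of_mem _ (mem_univ _)

theorem le_of_ndpfOfLE_smul_eq {k' : ℕ} {u' v' : GType m k'}
    (he : ndpfOfLE h • consZero v' = consZero u') : k' ≤ k := by
  have := card_le_card (he ▸ ndpfOfLE_smul_subset h (consZero v'))
  simpa [card_consZero] using this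

theorem eq_and_le_of_ndpfOfLE_smul_eq {u' v' : GType m k}
    (he : ndpfOfLE h • consZero v' = consZero u') : u' = u ∧ v ≤ v' := by
  have hu : consZero u' = consZero u :=
    eq_of_subset_of_card_le (he ▸ ndpfOfLE_smul_subset h _) (by simp [card_consZero])
  have hu' : u' = u := consZero_injective hu
  refine ⟨hu', (le_iff_consZeroEmb v v').2 fun j =>
    NDPF.le_of_ofLE_smul_eq (isBot_consZeroEmb_zero v) ((le_iff_consZeroEmb u v).1 h) ?_⟩
  exact (consZeroEmb_eq_smul (hu' ▸ he) j).symm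

end GType

namespace NDPF

open GType

variable {m : ℕ}

/-- `⊕_{k ≤ m} ℂ[G_{m,k}]`. -/
abbrev IncidenceSum (m : ℕ) : Type := (k : Fin (m + 1)) → ↥(incMatAlg (GType m k.1))

def toIncidenceSum : NDPF (m + 1) →* IncidenceSum m :=
  MonoidHom.pi fun _ =>
    (actionMatrixHom consZero consZero_injective
      fun _ _ _ _ => exists_smul_consZero_eq_of_mul).codRestrict (incMatAlg _)
      fun _ _ _ huv => if_neg (mt le_of_smul_consZero_eq huv)

theorem toIncidenceSum_apply_apply (f : NDPF (m + 1)) (k : Fin (m + 1)) (u v : GType m k) :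
    (toIncidenceSum f k : Matrix (GType m k) (GType m k) ℂ) u v =
      if f • consZero v = consZero u then 1 else 0 := rfl

def toIncidenceSumAlgHom : MonoidAlgebra ℂ (NDPF (m + 1)) →ₐ[ℂ] IncidenceSum m :=
  MonoidAlgebra.lift ℂ _ _ toIncidenceSum

theorem toIncidenceSumAlgHom_apply_apply (x : MonoidAlgebra ℂ (NDPF (m + 1))) (k : Fin (m + 1))
    (u v : GType m k) :
    (toIncidenceSumAlgHom x k : Matrix (GType m k) (GType m k) ℂ) u v =
      x.coeff.sum fun f c => c * if f • consZero v = consZero u then 1 else 0 := by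
  simp [toIncidenceSumAlgHom, MonoidAlgebra.lift_apply, Finsupp.sum, Matrix.sum_apply,
    toIncidenceSum_apply_apply]

theorem toIncidenceSumAlgHom_injective : Function.Injective (toIncidenceSumAlgHom (m := m)) := by
  rw [injective_iff_map_eq_zero]
  intro x hx
  suffices hcoeff : ∀ f, x.coeff f = 0 from MonoidAlgebra.ext (Finsupp.ext hcoeff)
  intro f
  induction f using WellFoundedGT.induction with
  | _ f ih =>
  obtain ⟨k, u, v, hv, hu⟩ := exists_consZero_eq_smul f.zero_mem_fiberMins f.card_smul_fiberMins
  have hentry :=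
    congrArg (fun y : IncidenceSum m => (y k : Matrix (GType m k) (GType m k) ℂ) u v) hx
  simp only [toIncidenceSumAlgHom_apply_apply, hu, hv] at hentry
  rw [Finsupp.sum, sum_eq_single f] at hentry
  · simpa using hentry
  · intro g _ hgf
    by_cases hg : g • fiberMins f = f • fiberMins f
    · rw [ih g (lt_of_le_of_ne (le_of_smul_fiberMins_eq hg) (Ne.symm hgf)), zero_mul]
    · rw [if_neg hg, mul_zero]
  · intro hf
    rw [Finsupp.notMem_support_iff.1 hf, zero_mul]

theorem single_mem_range_toIncidenceSumAlgHom (k : Fin (m + 1)) (v u : GType m k) (h : u ≤ v) :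
    Pi.single k (incMatAlgSingle h) ∈
      LinearMap.range (toIncidenceSumAlgHom (m := m)).toLinearMap := by
  induction k using WellFoundedLT.induction with
  | _ k ihk =>
  induction v using WellFoundedGT.induction with
  | _ v ihv =>
  set R := LinearMap.range (toIncidenceSumAlgHom (m := m)).toLinearMap
  set f := ndpfOfLE h
  have hf : toIncidenceSum f ∈ R :=
    ⟨MonoidAlgebra.single f 1, by simp [toIncidenceSumAlgHom]⟩
  suffices hrest : toIncidenceSum f - Pi.single k (incMatAlgSingle h) ∈ R by
    simpa using R.sub_mem hf hrest
  refine pi_incMatAlg_mem_of_single_mem _ fun k' u' v' h' hne => ?_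
  by_cases hk : k' = k
  · subst hk
    simp only [Pi.sub_apply, Pi.single_eq_same, AddSubgroupClass.coe_sub, Matrix.sub_apply,
      toIncidenceSum_apply_apply, coe_incMatAlgSingle, Matrix.single_apply] at hne
    have he : f • consZero v' = consZero u' := by
      by_contra he
      obtain ⟨rfl, rfl⟩ : u = u' ∧ v = v' := by simpa [he] using hne
      exact he (ndpfOfLE_smul_consZero h)
    obtain ⟨rfl, hvv'⟩ := eq_and_le_of_ndpfOfLE_smul_eq h he
    refine ihv v' (lt_of_le_of_ne hvv' ?_) h'
    rintro rfl
    simp [he] at hne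
  · simp only [Pi.sub_apply, Pi.single_eq_of_ne hk, sub_zero, toIncidenceSum_apply_apply] at hne
    have he : f • consZero v' = consZero u' := by
      by_contra he
      simp [he] at hne
    exact ihk k' (lt_of_le_of_ne (le_of_ndpfOfLE_smul_eq h he) hk) v' u' h'

theorem toIncidenceSumAlgHom_surjective : Function.Surjective (toIncidenceSumAlgHom (m := m)) :=
  LinearMap.range_eq_top.1 <| top_unique fun y _ =>
    pi_incMatAlg_mem_of_single_mem y fun k _ _ h _ =>
      single_mem_range_toIncidenceSumAlgHom k _ _ h

end NDPF

/-- **Statement 19.** The monoid algebra `ℂ[NDPFₙ]` is isomorphic, as a `ℂ`-algebra,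
to the direct sum `⊕_{k=0}^{n-1} ℂ[G_{n-1,k}]` of the incidence algebras of the
posets `G_{n-1,k}` of `k`-element subsets of `{1, …, n-1}` with the componentwise
(Gale) order. -/
theorem ndpf_incidence_decomposition (n : ℕ) (hn : 1 ≤ n) :
    Nonempty (MonoidAlgebra ℂ (NDPF n) ≃ₐ[ℂ]
      ((k : Fin n) → ↥(incMatAlg (GType (n - 1) k.1)))) := by
  obtain ⟨m, rfl⟩ : ∃ m, n = m + 1 := ⟨n - 1, by omega⟩
  exact ⟨AlgEquiv.ofBijective NDPF.toIncidenceSumAlgHom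
    ⟨NDPF.toIncidenceSumAlgHom_injective, NDPF.toIncidenceSumAlgHom_surjective⟩⟩
end
end
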